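/- Let p > 3 be a prime and let n ≥ 3, M be positive integers with A = 6M - n(n+1)(n+5) and R(n,M) as in the explicit formula. If M³(n-1)²(n+4)⁴A⁷/(54·n⁴(n+1)²·R(n,M)) is a nonzero integer, then v_p(n) ≤ v_p(M), where v_p denotes the p-adic valuation. -/
import Mathlib


theorem stmt (p : ℕ) (hp : p.Prime) (hp3 : 3 < p) (n M : ℤ) (hn : 3 ≤ n) (hM : 0 < M)
    (A : ℤ) (hA : A = 6*M - n*(n+1)*(n+5))
    (R : ℤ) (hR : R = 2^14*3^6*M^6 - 2^13*3^7*n*(n+1)*(n+3)*M^5 + 2^9*3^5*n^2*(n+1)*(n^4+93*n^3+629*n^2+1339*n+818)*M^4 - 2^7*3^4*n^3*(n+1)^2*(13*n^5+436*n^4+3688*n^3+12782*n^2+19163*n+9998)*M^3 + 2^2*3^3*n^4*(n+1)^3*(n+2)*(n+7)^2*(5*n^4+447*n^3+3303*n^2+7873*n+5652)*M^2 - 2^2*3^3*n^5*(n+1)^4*(n+2)^2*(n+5)^2*(n+7)^3*(3*n+5)*M + n^6*(n+1)^5*(n+2)^3*(n+5)^3*(n+7)^4)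
    (hint : ∃ k : ℤ, k ≠ 0 ∧
      ((M^3*(n-1)^2*(n+4)^4*A^7 : ℚ) / (54*n^4*(n+1)^2*R) = (k : ℚ))) :
    padicValInt p n ≤ padicValInt p M := by
  haveI : Fact p.Prime := ⟨hp⟩
  by_contra hcon
  push_neg at hcon
  have hMne : M ≠ 0 := hM.ne'
  have hqp : Prime (p : ℤ) := Nat.prime_iff_prime_int.mp hp
  have hqne : (p : ℤ) ≠ 0 := by exact_mod_cast hp.ne_zero
  have h1 : (p:ℤ) ^ padicValInt p M ∣ M := padicValInt_dvd M
  have h2 : ¬ (p:ℤ) ^ (padicValInt p M + 1) ∣ M := by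
    rw [padicValInt_dvd_iff]
    push_neg
    exact ⟨hMne, by omega⟩
  have h3 : (p:ℤ) ^ (padicValInt p M + 1) ∣ n := by
    rw [padicValInt_dvd_iff]
    exact Or.inr (by omega)
  -- clean integer form of the hypothesis
  obtain ⟨k, hk0, hk⟩ := hint
  have hk2 : ((M^3*(n-1)^2*(n+4)^4*A^7 : ℤ):ℚ) / ((54*n^4*(n+1)^2*R : ℤ):ℚ) = (k:ℚ) := by
    push_cast
    linear_combination hk
  have hDne : (54*n^4*(n+1)^2*R : ℤ) ≠ 0 := by
    intro h
    apply hk0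
    rw [h] at hk2
    simp at hk2
    exact_mod_cast hk2.symm
  rw [div_eq_iff (by exact_mod_cast hDne)] at hk2
  have hZ : M^3*(n-1)^2*(n+4)^4*A^7 = k * (54*n^4*(n+1)^2*R) := by exact_mod_cast hk2
  generalize hmeq : padicValInt p M = m at h1 h2 h3
  clear hmeq hcon hk hk2 hDne
  obtain ⟨mm, hmm⟩ := h1
  obtain ⟨nn, hnn⟩ := h3
  have hpmm : ¬ (p:ℤ) ∣ mm := by
    intro ⟨t, ht⟩
    exact h2 ⟨t, by rw [hmm, ht]; ring⟩
  subst hA hR hmm hnn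
  set q : ℤ := (p : ℤ) with hq
  set AA : ℤ := 6*mm - q*(nn*(q^(m+1)*nn+1)*(q^(m+1)*nn+5)) with hAA
  have hpAA : ¬ q ∣ AA := by
    intro h
    have h6 : q ∣ 6 * mm := by
      have : (6:ℤ) * mm = AA + q*(nn*(q^(m+1)*nn+1)*(q^(m+1)*nn+5)) := by rw [hAA]; ring
      rw [this]
      exact dvd_add h (Dvd.intro _ rfl)
    rcases hqp.dvd_mul.mp h6 with h' | h'
    · rw [hq] at h'
      have hp6 : p ∣ 6 := by exact_mod_cast h'
      have hle := Nat.le_of_dvd (by norm_num) hp6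
      have hcases : p = 4 ∨ p = 5 ∨ p = 6 := by omega
      rcases hcases with rfl | rfl | rfl
      · exact absurd hp (by decide)
      · exact absurd hp6 (by decide)
      · exact absurd hp (by decide)
    · exact hpmm h'
  -- the numerator equals q^(10m) * NN
  set NN : ℤ := mm^3*(q^(m+1)*nn-1)^2*(q^(m+1)*nn+4)^4*AA^7 with hNN
  have hL : (q^m*mm)^3*((q^(m+1)*nn)-1)^2*((q^(m+1)*nn)+4)^4*(6*(q^m*mm) - (q^(m+1)*nn)*((q^(m+1)*nn)+1)*((q^(m+1)*nn)+5))^7 = q^(10*m) * NN := by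
    rw [hNN, hAA]; ring
  rw [hL] at hZ
  -- the right-hand side is divisible by q^(10m+4)
  have hRdvd : q^(10*m) * q^4 ∣ q^(10*m) * NN := by
    rw [hZ]
    refine ⟨k * (54*nn^4*((q^(m+1)*nn)+1)^2*(2^14*3^6*mm^6
      - q*(2^13*3^7*nn*((q^(m+1)*nn)+1)*((q^(m+1)*nn)+3)*mm^5)
      + q^2*(2^9*3^5*nn^2*((q^(m+1)*nn)+1)*((q^(m+1)*nn)^4+93*(q^(m+1)*nn)^3+629*(q^(m+1)*nn)^2+1339*(q^(m+1)*nn)+818)*mm^4)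
      - q^3*(2^7*3^4*nn^3*((q^(m+1)*nn)+1)^2*(13*(q^(m+1)*nn)^5+436*(q^(m+1)*nn)^4+3688*(q^(m+1)*nn)^3+12782*(q^(m+1)*nn)^2+19163*(q^(m+1)*nn)+9998)*mm^3)
      + q^4*(2^2*3^3*nn^4*((q^(m+1)*nn)+1)^3*((q^(m+1)*nn)+2)*((q^(m+1)*nn)+7)^2*(5*(q^(m+1)*nn)^4+447*(q^(m+1)*nn)^3+3303*(q^(m+1)*nn)^2+7873*(q^(m+1)*nn)+5652)*mm^2)
      - q^5*(2^2*3^3*nn^5*((q^(m+1)*nn)+1)^4*((q^(m+1)*nn)+2)^2*((q^(m+1)*nn)+5)^2*((q^(m+1)*nn)+7)^3*(3*(q^(m+1)*nn)+5)*mm)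
      + q^6*(nn^6*((q^(m+1)*nn)+1)^5*((q^(m+1)*nn)+2)^3*((q^(m+1)*nn)+5)^3*((q^(m+1)*nn)+7)^4))), ?_⟩
    ring
  have h4 : q^4 ∣ NN := (mul_dvd_mul_iff_left (pow_ne_zero (10*m) hqne)).mp hRdvd
  have hdNN : q ∣ NN := dvd_trans (dvd_pow_self q (by norm_num)) h4
  rw [hNN] at hdNN
  have hdn : q ∣ q^(m+1)*nn := dvd_mul_of_dvd_left (dvd_pow_self q (Nat.succ_ne_zero m)) nn
  rcases hqp.dvd_mul.mp hdNN with h' | h'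
  · rcases hqp.dvd_mul.mp h' with h'' | h''
    · rcases hqp.dvd_mul.mp h'' with h3 | h3
      · exact hpmm (hqp.dvd_of_dvd_pow h3)
      · have := hqp.dvd_of_dvd_pow h3
        have : q ∣ 1 := by
          have : (1:ℤ) = q^(m+1)*nn - (q^(m+1)*nn - 1) := by ring
          rw [this]
          exact dvd_sub hdn (hqp.dvd_of_dvd_pow h3)
        exact hqp.not_dvd_one this
    · have hq4 : q ∣ 4 := by
        have h4' : (4:ℤ) = (q^(m+1)*nn + 4) - q^(m+1)*nn := by ring
        rw [h4']
        exact dvd_sub (hqp.dvd_of_dvd_pow h'') hdn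
      rw [hq] at hq4
      have hp4 : p ∣ 4 := by exact_mod_cast hq4
      have hle := Nat.le_of_dvd (by norm_num) hp4
      have hcases : p = 4 := by omega
      subst hcases
      exact absurd hp (by decide)
  · exact hpAA (hqp.dvd_of_dvd_pow h')
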